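/- Let c be a proper 3-coloring of H_k with k ≥ 1, and suppose c(u_0) ≠ c(v_0). Then for each i with 1 ≤ i ≤ k, the color c(w_i) is the unique element of Fin 3 different from both c(u_{i-1}) and c(v_{i-1}), and moreover the set {c(u_i), c(v_i)} omits c(w_i). -/
import Mathlib


open SimpleGraph

/-- Vertex type of `H_k`: the `u`'s, the `v`'s and the `w`'s. -/
abbrev HVert (k : ℕ) := Fin (k+1) ⊕ Fin (k+1) ⊕ Fin k

/-- The vertex `u_i`. -/
def uVert (k : ℕ) (i : Fin (k+1)) : HVert k := Sum.inl i

/-- The vertex `v_i`. -/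
def vVert (k : ℕ) (i : Fin (k+1)) : HVert k := Sum.inr (Sum.inl i)

/-- The vertex `w_{t+1}` (indexed by `t : Fin k`). -/
def wVert (k : ℕ) (t : Fin k) : HVert k := Sum.inr (Sum.inr t)

/-- Base relation generating the edges of `H_k`:
`u_{i-1}u_i`, `v_{i-1}v_i`, and `w_i u_{i-1}, w_i u_i, w_i v_{i-1}, w_i v_i`. -/
def HRel (k : ℕ) : HVert k → HVert k → Prop
  | Sum.inl i, Sum.inl j => (i : ℕ) + 1 = j
  | Sum.inr (Sum.inl i), Sum.inr (Sum.inl j) => (i : ℕ) + 1 = j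
  | Sum.inr (Sum.inr t), Sum.inl i => (i : ℕ) = t ∨ (i : ℕ) = (t : ℕ) + 1
  | Sum.inr (Sum.inr t), Sum.inr (Sum.inl i) => (i : ℕ) = t ∨ (i : ℕ) = (t : ℕ) + 1
  | _, _ => False

/-- The graph `H_k`. -/
def Hgraph (k : ℕ) : SimpleGraph (HVert k) := SimpleGraph.fromRel (HRel k)

lemma adj_wu (k : ℕ) (t : Fin k) : (Hgraph k).Adj (wVert k t) (uVert k t.castSucc) := by
  constructor
  · simp [wVert, uVert]
  · left; simp [HRel, wVert, uVert]

lemma adj_wu' (k : ℕ) (t : Fin k) : (Hgraph k).Adj (wVert k t) (uVert k t.succ) := by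
  constructor
  · simp [wVert, uVert]
  · left; right; simp [HRel, wVert, uVert]

lemma adj_wv (k : ℕ) (t : Fin k) : (Hgraph k).Adj (wVert k t) (vVert k t.castSucc) := by
  constructor
  · simp [wVert, vVert]
  · left; simp [HRel, wVert, vVert]

lemma adj_wv' (k : ℕ) (t : Fin k) : (Hgraph k).Adj (wVert k t) (vVert k t.succ) := by
  constructor
  · simp [wVert, vVert]
  · left; right; simp [HRel, wVert, vVert]

lemma adj_uu (k : ℕ) (t : Fin k) : (Hgraph k).Adj (uVert k t.castSucc) (uVert k t.succ) := by
  constructor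
  · simp [uVert, Fin.ext_iff]
  · left; simp [HRel, uVert]

lemma adj_vv (k : ℕ) (t : Fin k) : (Hgraph k).Adj (vVert k t.castSucc) (vVert k t.succ) := by
  constructor
  · simp [vVert, Fin.ext_iff]
  · left; simp [HRel, vVert]

lemma fin3_unique : ∀ x y z a : Fin 3, x ≠ y → z ≠ x → z ≠ y → ((a ≠ x ∧ a ≠ y) ↔ a = z) := by
  decide

/-- if `c` is a proper 3-coloring of `H_k` (`k ≥ 1`) with
`c(u_0) ≠ c(v_0)`, then for each `i` (here `i = t+1`), `c(w_i)` is the unique color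
different from both `c(u_{i-1})` and `c(v_{i-1})`, and `{c(u_i), c(v_i)}` omits `c(w_i)`. -/
theorem Hk_w_color_unique (k : ℕ) (hk : 1 ≤ k) (c : HVert k → Fin 3)
    (hc : ∀ x y, (Hgraph k).Adj x y → c x ≠ c y)
    (h0 : c (uVert k 0) ≠ c (vVert k 0)) :
    ∀ t : Fin k,
      (∀ a : Fin 3,
        (a ≠ c (uVert k t.castSucc) ∧ a ≠ c (vVert k t.castSucc)) ↔ a = c (wVert k t)) ∧
      c (uVert k t.succ) ≠ c (wVert k t) ∧ c (vVert k t.succ) ≠ c (wVert k t) := by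
  have key : ∀ n : ℕ, ∀ h : n < k + 1, c (uVert k ⟨n, h⟩) ≠ c (vVert k ⟨n, h⟩) := by
    intro n
    induction n with
    | zero => intro h; exact h0
    | succ m ih =>
      intro h
      have hm : m < k := Nat.lt_of_succ_lt_succ h
      set t : Fin k := ⟨m, hm⟩
      have hcs : (t.castSucc : Fin (k+1)) = ⟨m, Nat.lt_succ_of_lt hm⟩ := rfl
      have hsc : (t.succ : Fin (k+1)) = ⟨m+1, h⟩ := rfl
      have huv := ih (Nat.lt_succ_of_lt hm)
      have hwu := hc _ _ (adj_wu k t)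
      have hwv := hc _ _ (adj_wv k t)
      have hwu' := hc _ _ (adj_wu' k t)
      have hwv' := hc _ _ (adj_wv' k t)
      have huu := hc _ _ (adj_uu k t)
      have hvv := hc _ _ (adj_vv k t)
      rw [hcs] at hwu hwv huu hvv
      rw [hsc] at hwu' hwv' huu hvv
      revert huv hwu hwv hwu' hwv' huu hvv
      generalize c (uVert k ⟨m, Nat.lt_succ_of_lt hm⟩) = a
      generalize c (vVert k ⟨m, Nat.lt_succ_of_lt hm⟩) = b
      generalize c (uVert k ⟨m+1, h⟩) = a'
      generalize c (vVert k ⟨m+1, h⟩) = b'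
      generalize c (wVert k t) = w
      revert a b a' b' w; decide
  intro t
  have huv : c (uVert k t.castSucc) ≠ c (vVert k t.castSucc) := by
    have := key t (Nat.lt_succ_of_lt t.isLt)
    convert this using 3 <;> rfl
  have hwu := hc _ _ (adj_wu k t)
  have hwv := hc _ _ (adj_wv k t)
  refine ⟨fun a => fin3_unique _ _ _ a huv hwu hwv, ?_, ?_⟩
  · exact fun hh => hc _ _ (adj_wu' k t) hh.symm
  · exact fun hh => hc _ _ (adj_wv' k t) hh.symm
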